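/- arXiv:0903.4226 — 3 statements merged into one kernel-verified Lean document; each statement's English description precedes it below -/
import Mathlib

section
/- Let a_n^{(k)} denote the n-th Mahler coefficient of S^k. For every j ≥ 0 and every n > j·p^k - j + 1, the coefficient a_n^{(k)} is divisible by p^j; in particular |a_n^{(k)}| ≤ p^{-j}. -/
/-!
Put `f m = S^k m` for `m ∈ ℕ`, so that `a_n^{(k)} = Δ^n f 0`. Since `S^k (x + p^k t) = S^k x + t`,
`f (m + p^k) = f m + 1`, hence every difference `Δ^m f` with `m ≥ 1` is `p^k`-periodic. Newton's
formula `Δ^m f (y + p^k) = ∑ binom(p^k, i) Δ^{m+i} f y` then writes `a_{m+p^k}` as a combination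
of `a_{m+1}, …, a_{m+p^k-1}` with coefficients `binom(p^k, i)`, `0 < i < p^k`, all divisible by `p`;
induction on `j` gives `p^j ∣ a_n`.
-/

variable {p : ℕ} [hp : Fact p.Prime]

lemma padicShift_exists (x : ℤ_[p]) :
    ∃ y : ℤ_[p], x = ((PadicInt.toZMod x).val : ℤ_[p]) + p * y := by
  have h := PadicInt.toZMod_spec x
  rw [PadicInt.maximalIdeal_eq_span_p, Ideal.mem_span_singleton] at h
  obtain ⟨y, hy⟩ := h
  refine ⟨y, ?_⟩
  rw [← ZMod.natCast_val] at hy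
  linear_combination hy

/-- The `p`-adic shift, deleting the first digit of the `p`-adic expansion. -/
noncomputable def padicShift (x : ℤ_[p]) : ℤ_[p] :=
  Classical.choose (padicShift_exists x)

/-- The `n`-th Mahler coefficient of the `k`-fold iterate of the `p`-adic shift. -/
noncomputable def mahlerCoeffShift (k n : ℕ) : ℤ_[p] :=
  ∑ i ∈ Finset.range (n + 1),
    (-1 : ℤ_[p]) ^ (n + i) * padicShift^[k] ((i : ℤ_[p])) * (n.choose i : ℤ_[p])


open Finset

section FwdDiff

variable {M G : Type*} [AddCommMonoid M] [AddCommGroup G] {h P : M} {f : M → G}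

theorem Function.Periodic.fwdDiff_iter (hf : Function.Periodic f P) (n : ℕ) :
    Function.Periodic ((fwdDiff h)^[n] f) P := by
  induction n with
  | zero => exact hf
  | succ n ih =>
    intro y
    simp only [Function.iterate_succ_apply', fwdDiff, add_right_comm y P h, ih (y + h), ih y]

theorem periodic_fwdDiff_of_add_eq_add_const {c : G} (hf : ∀ y, f (y + P) = f y + c) :
    Function.Periodic (fwdDiff h f) P := fun y ↦ by
  simp only [fwdDiff, add_right_comm y P h, hf]
  abel

theorem sum_choose_smul_fwdDiff_iter_eq_zero {c : G} {n m : ℕ}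
    (hf : ∀ y, f (y + n • h) = f y + c) (hm : m ≠ 0) (y : M) :
    ∑ i ∈ range n, n.choose (i + 1) • (fwdDiff h)^[i + 1 + m] f y = 0 := by
  have hper : Function.Periodic ((fwdDiff h)^[m] f) (n • h) := by
    obtain ⟨m, rfl⟩ := Nat.exists_eq_succ_of_ne_zero hm
    rw [Function.iterate_succ]
    exact (periodic_fwdDiff_of_add_eq_add_const (h := h) hf).fwdDiff_iter m
  have hnewton := shift_eq_sum_fwdDiff_iter h ((fwdDiff h)^[m] f) n y
  simp only [hper y, sum_range_succ', Nat.choose_zero_right, one_smul,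
    ← Function.iterate_add_apply] at hnewton
  simpa using hnewton.symm

end FwdDiff

theorem pow_dvd_fwdDiff_iter_of_add_eq_add_const {R : Type*} [CommRing R] {f : ℕ → R}
    {N : ℕ} {c π : R} (hf : ∀ y, f (y + N) = f y + c) (hN : N ≠ 0)
    (hπ : ∀ i, 0 < i → i < N → π ∣ (N.choose i : R)) (j : ℕ) {n : ℕ}
    (hn : j * (N - 1) + 2 ≤ n) (y : ℕ) : π ^ j ∣ (fwdDiff 1)^[n] f y := by
  obtain ⟨N, rfl⟩ := Nat.exists_eq_succ_of_ne_zero hN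
  induction j generalizing n with
  | zero => simp
  | succ j ih =>
    simp only [Nat.succ_mul] at ih hn
    obtain ⟨m, rfl⟩ : ∃ m, n = N + 1 + m := ⟨n - (N + 1), by omega⟩
    have hrec := sum_choose_smul_fwdDiff_iter_eq_zero (h := 1) (m := m)
      (by simpa using hf) (by omega) y
    rw [sum_range_succ, Nat.choose_self, one_smul, add_eq_zero_iff_eq_neg'] at hrec
    rw [hrec]
    refine dvd_neg.mpr (dvd_sum fun i hi ↦ ?_)
    rw [mem_range] at hi
    rw [nsmul_eq_mul, pow_succ']
    exact mul_dvd_mul (hπ (i + 1) (by omega) (by omega)) (ih (by omega))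

lemma padicShift_spec (x : ℤ_[p]) :
    x = ((PadicInt.toZMod x).val : ℤ_[p]) + p * padicShift x :=
  Classical.choose_spec (padicShift_exists x)

lemma padicShift_add_mul (x t : ℤ_[p]) :
    padicShift (x + (p : ℤ_[p]) * t) = padicShift x + t := by
  have hdigit : PadicInt.toZMod (x + (p : ℤ_[p]) * t) = PadicInt.toZMod x := by simp
  have hx := padicShift_spec x
  have hxt := padicShift_spec (x + (p : ℤ_[p]) * t)
  rw [hdigit] at hxt
  refine mul_left_cancel₀ (Nat.cast_ne_zero.mpr hp.out.ne_zero : (p : ℤ_[p]) ≠ 0) ?_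
  linear_combination hx - hxt

lemma padicShift_iterate_add_pow_mul (k : ℕ) (x t : ℤ_[p]) :
    padicShift^[k] (x + (p : ℤ_[p]) ^ k * t) = padicShift^[k] x + t := by
  induction k generalizing x with
  | zero => simp
  | succ k ih =>
    rw [Function.iterate_succ_apply, Function.iterate_succ_apply, pow_succ', mul_assoc,
      padicShift_add_mul, ih]

lemma mahlerCoeffShift_eq_fwdDiff_iter (k n : ℕ) :
    mahlerCoeffShift (p := p) k n =
      (fwdDiff 1)^[n] (fun m : ℕ ↦ padicShift^[k] (m : ℤ_[p])) 0 := by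
  rw [fwdDiff_iter_eq_sum_shift, mahlerCoeffShift]
  refine sum_congr rfl fun i hi ↦ ?_
  have hsign : (-1 : ℤ_[p]) ^ (n + i) = (-1) ^ (n - i) := by
    rw [show n + i = (n - i) + 2 * i by grind, pow_add, pow_mul, neg_one_sq, one_pow, mul_one]
  simp [zsmul_eq_mul, hsign, mul_comm, mul_left_comm]

/-- `p^j` divides `a_n^{(k)}` for `n > j p^k - j + 1`; in particular
`|a_n^{(k)}| ≤ p^{-j}`. -/
theorem pow_dvd_mahlerCoeffShift (k j n : ℕ) (hn : j * p ^ k - j + 1 < n) :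
    (p : ℤ_[p]) ^ j ∣ mahlerCoeffShift (p := p) k n ∧
    ‖mahlerCoeffShift (p := p) k n‖ ≤ (p : ℝ) ^ (-(j : ℤ)) := by
  have hdvd : (p : ℤ_[p]) ^ j ∣ mahlerCoeffShift (p := p) k n := by
    rw [mahlerCoeffShift_eq_fwdDiff_iter]
    refine pow_dvd_fwdDiff_iter_of_add_eq_add_const (c := 1)
      (fun y ↦ by simpa using padicShift_iterate_add_pow_mul k y 1)
      (pow_pos hp.out.pos k).ne' (fun i hi hiN ↦ ?_) j ?_ 0
    · exact Nat.cast_dvd_cast (hp.out.dvd_choose_pow hi.ne' hiN.ne)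
    · rw [Nat.mul_sub_one]
      omega
  exact ⟨hdvd, (PadicInt.norm_le_pow_iff_mem_span_pow _ j).2 (Ideal.mem_span_singleton.2 hdvd)⟩
end

section
/- Let a_n^{(k)} be the Mahler coefficients of S^k. For all n ≥ 0, p^{⌊log_p n⌋} · |a_n^{(k)}| ≤ p^k, with equality if and only if n = p^k. (Here for n = 0 interpret ⌊log_p n⌋ = 0.) -/
/-!
On natural numbers `S^k i = ⌊i / q⌋` with `q = p^k`, so `a_n^{(k)}` is the integer
`b_n = Δⁿ ⌊· / q⌋ (0)`. Since `⌊(i + q) / q⌋ = ⌊i / q⌋ + 1`, Newton's formula gives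
`∑_{j ≤ q} C(q, j) b_{m+j} = b_m + [m = 0]`. Hence `b_n = 0` for `n < q`, `b_q = 1`, and for
`n > q` the coefficient `b_n` is a combination of `b_{n-q+j}`, `0 < j < q`, with coefficients
`C(q, j)` divisible by `p`. Induction on `n` then gives `p^(⌊log_p n⌋ + 1) ∣ q b_n` for `n > q`,
that is `p^⌊log_p n⌋ |b_n| ≤ p^(k-1)`.
-/

variable {p : ℕ} [hp : Fact p.Prime]

open Finset fwdDiff

lemma sum_choose_smul_fwdDiff_iter_of_add_const {G : Type*} [AddCommGroup G] {f : ℕ → G}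
    {q : ℕ} {c : G} (hf : ∀ x, f (x + q) = f x + c) (m : ℕ) :
    ∑ j ∈ range (q + 1), q.choose j • Δ_[1] ^[m + j] f 0 =
      Δ_[1] ^[m] f 0 + if m = 0 then c else 0 := by
  have hconst : Δ_[1] ^[m] (fun _ ↦ c : ℕ → G) 0 = if m = 0 then c else 0 := by
    cases m with
    | zero => simp
    | succ m =>
      simp [Function.iterate_succ_apply, Function.iterate_fixed (fwdDiff_const (1 : ℕ) (0 : G))]
  have hshift : (fun x ↦ f (x + q)) = f + fun _ ↦ c := funext hf
  calc ∑ j ∈ range (q + 1), q.choose j • Δ_[1] ^[m + j] f 0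
      = Δ_[1] ^[m] f (0 + q • 1) := by
        rw [shift_eq_sum_fwdDiff_iter (1 : ℕ) (Δ_[1] ^[m] f)]
        simp only [← Function.iterate_add_apply, add_comm]
    _ = Δ_[1] ^[m] (fun x ↦ f (x + q)) 0 := by simp [fwdDiff_iter_comp_add]
    _ = Δ_[1] ^[m] f 0 + if m = 0 then c else 0 := by
        rw [hshift, fwdDiff_iter_add, Pi.add_apply, hconst]

noncomputable def mahlerCoeffDiv (q n : ℕ) : ℤ := Δ_[1] ^[n] (fun i : ℕ ↦ ((i / q : ℕ) : ℤ)) 0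

lemma mahlerCoeffDiv_eq_sum (q n : ℕ) :
    mahlerCoeffDiv q n =
      ∑ i ∈ range (n + 1), (-1 : ℤ) ^ (n + i) * n.choose i * ((i / q : ℕ) : ℤ) := by
  rw [mahlerCoeffDiv, fwdDiff_iter_eq_sum_shift]
  refine sum_congr rfl fun i hi ↦ ?_
  have : n + i = n - i + 2 * i := by grind
  simp [this, pow_add, pow_mul]

lemma mahlerCoeffDiv_of_lt {q n : ℕ} (h : n < q) : mahlerCoeffDiv q n = 0 := by
  rw [mahlerCoeffDiv_eq_sum]
  refine sum_eq_zero fun i hi ↦ ?_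
  rw [Nat.div_eq_of_lt (by grind), Nat.cast_zero, mul_zero]

lemma sum_choose_mul_mahlerCoeffDiv {q : ℕ} (hq : 0 < q) (m : ℕ) :
    ∑ j ∈ range (q + 1), (q.choose j : ℤ) * mahlerCoeffDiv q (m + j) =
      mahlerCoeffDiv q m + if m = 0 then 1 else 0 := by
  simpa [mahlerCoeffDiv, nsmul_eq_mul] using
    sum_choose_smul_fwdDiff_iter_of_add_const (f := fun i : ℕ ↦ ((i / q : ℕ) : ℤ)) (c := 1)
      (fun x ↦ by simp [Nat.add_div_right x hq]) m

lemma mahlerCoeffDiv_self {q : ℕ} (hq : 0 < q) : mahlerCoeffDiv q q = 1 := by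
  have h := sum_choose_mul_mahlerCoeffDiv hq 0
  rw [sum_range_succ, sum_eq_zero fun j hj ↦ by rw [mahlerCoeffDiv_of_lt (by grind), mul_zero],
    mahlerCoeffDiv_of_lt hq] at h
  simpa using h

lemma mahlerCoeffDiv_add {q m : ℕ} (hq : 0 < q) (hm : m ≠ 0) :
    mahlerCoeffDiv q (m + q) = -∑ j ∈ Ico 1 q, (q.choose j : ℤ) * mahlerCoeffDiv q (m + j) := by
  have h := sum_choose_mul_mahlerCoeffDiv hq m
  rw [sum_range_succ, range_eq_Ico, sum_eq_sum_Ico_succ_bot hq] at h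
  simp only [Nat.choose_zero_right, Nat.choose_self, add_zero, if_neg hm] at h
  push_cast at h
  linarith

lemma pow_log_succ_dvd_mahlerCoeffDiv {k n : ℕ} (hn : p ^ k < n) :
    (p : ℤ) ^ (Nat.log p n + 1) ∣ p ^ k * mahlerCoeffDiv (p ^ k) n := by
  induction n using Nat.strong_induction_on with
  | _ n ih =>
  have hp2 := hp.out.two_le
  obtain ⟨m, rfl⟩ : ∃ m, n = m + p ^ k := ⟨n - p ^ k, by omega⟩
  rw [mahlerCoeffDiv_add (by positivity) (by omega), mul_neg, dvd_neg, mul_sum]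
  refine dvd_sum fun j hj ↦ ?_
  obtain ⟨hj0, hjq⟩ := mem_Ico.mp hj
  have hchoose : (p : ℤ) ∣ (p ^ k).choose j :=
    Int.natCast_dvd_natCast.mpr (hp.out.dvd_choose_pow (by omega) (by omega))
  rw [mul_left_comm]
  -- `n < w + q` for `w = m + j`: if `w ≤ q` then `n < p q`, otherwise `n < p w`.
  rcases le_or_gt (m + j) (p ^ k) with hw | hw
  · have hlog : Nat.log p (m + p ^ k) < k + 1 :=
      Nat.log_lt_of_lt_pow (by omega) (by rw [pow_succ]; nlinarith)
    calc (p : ℤ) ^ (Nat.log p (m + p ^ k) + 1) ∣ p ^ (1 + k) := pow_dvd_pow _ (by omega)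
      _ ∣ _ := by rw [pow_add, pow_one]; exact mul_dvd_mul hchoose (dvd_mul_right _ _)
  · have hlog : Nat.log p (m + p ^ k) ≤ Nat.log p (m + j) + 1 :=
      calc _ ≤ Nat.log p ((m + j) * p) := Nat.log_mono_right (by nlinarith)
        _ = _ := Nat.log_mul_base hp.out.one_lt (by omega)
    calc (p : ℤ) ^ (Nat.log p (m + p ^ k) + 1) ∣ p ^ (1 + (Nat.log p (m + j) + 1)) :=
          pow_dvd_pow _ (by omega)
      _ ∣ _ := by rw [pow_add, pow_one]; exact mul_dvd_mul hchoose (ih _ (by omega) hw)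

lemma pow_mul_norm_intCast_le_of_dvd {a c : ℕ} {z : ℤ} (h : (p : ℤ) ^ a ∣ p ^ c * z) :
    (p : ℝ) ^ a * ‖(z : ℤ_[p])‖ ≤ p ^ c := by
  obtain ⟨y, hy⟩ := h
  have hnorm := congrArg (fun t : ℤ ↦ ‖(t : ℤ_[p])‖) hy
  simp only [Int.cast_mul, Int.cast_pow, Int.cast_natCast, norm_mul, norm_pow,
    PadicInt.norm_p, inv_pow] at hnorm
  have hp0 : (0 : ℝ) < p := by exact_mod_cast hp.out.pos
  calc (p : ℝ) ^ a * ‖(z : ℤ_[p])‖ = p ^ c * ‖(y : ℤ_[p])‖ := by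
        field_simp at hnorm
        linear_combination hnorm
    _ ≤ p ^ c := mul_le_of_le_one_right (by positivity) (PadicInt.norm_le_one _)

lemma padicShift_natCast (n : ℕ) : padicShift (n : ℤ_[p]) = ((n / p : ℕ) : ℤ_[p]) := by
  have hdigit : ((PadicInt.toZMod (n : ℤ_[p])).val : ℤ_[p]) = ((n % p : ℕ) : ℤ_[p]) := by
    rw [map_natCast, ZMod.val_natCast]
  have hdiv : (n : ℤ_[p]) = p * ((n / p : ℕ) : ℤ_[p]) + ((n % p : ℕ) : ℤ_[p]) := by
    exact_mod_cast (Nat.div_add_mod n p).symm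
  apply mul_left_cancel₀ (Nat.cast_ne_zero.mpr hp.out.ne_zero : (p : ℤ_[p]) ≠ 0)
  rw [padicShift]
  linear_combination hdiv - Classical.choose_spec (padicShift_exists (n : ℤ_[p])) - hdigit

lemma padicShift_iter_natCast (k n : ℕ) :
    padicShift^[k] (n : ℤ_[p]) = ((n / p ^ k : ℕ) : ℤ_[p]) := by
  induction k generalizing n with
  | zero => simp
  | succ k ih =>
    rw [Function.iterate_succ_apply, padicShift_natCast, ih, Nat.div_div_eq_div_mul, pow_succ']

lemma mahlerCoeffShift_eq_mahlerCoeffDiv (k n : ℕ) :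
    mahlerCoeffShift (p := p) k n = mahlerCoeffDiv (p ^ k) n := by
  rw [mahlerCoeffShift, mahlerCoeffDiv_eq_sum, Int.cast_sum]
  refine sum_congr rfl fun i _ ↦ ?_
  simp only [padicShift_iter_natCast, Int.cast_mul, Int.cast_pow, Int.cast_neg, Int.cast_one,
    Int.cast_natCast]
  ring

lemma pow_log_mul_norm_mahlerCoeffShift_lt {k n : ℕ} (h : n ≠ p ^ k) :
    (p : ℝ) ^ Nat.log p n * ‖mahlerCoeffShift (p := p) k n‖ < p ^ k := by
  have hp1 : (1 : ℝ) < p := by exact_mod_cast hp.out.one_lt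
  have hpk : (0 : ℝ) < p ^ k := by positivity
  rw [mahlerCoeffShift_eq_mahlerCoeffDiv]
  rcases h.lt_or_gt with hn | hn
  · simpa only [mahlerCoeffDiv_of_lt hn, Int.cast_zero, norm_zero, mul_zero] using hpk
  · have hle := pow_mul_norm_intCast_le_of_dvd (pow_log_succ_dvd_mahlerCoeffDiv hn)
    rw [pow_succ, mul_right_comm] at hle
    nlinarith [norm_nonneg ((mahlerCoeffDiv (p ^ k) n : ℤ) : ℤ_[p]),
      pow_pos (by positivity : (0 : ℝ) < p) (Nat.log p n)]

/-- `p^{⌊log_p n⌋} |a_n^{(k)}| ≤ p^k`, with equality iff `n = p^k`. -/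
theorem mahlerCoeffShift_norm_le_and_eq_iff (k n : ℕ) :
    (p : ℝ) ^ (Nat.log p n) * ‖mahlerCoeffShift (p := p) k n‖ ≤ (p : ℝ) ^ k ∧
    ((p : ℝ) ^ (Nat.log p n) * ‖mahlerCoeffShift (p := p) k n‖ = (p : ℝ) ^ k ↔ n = p ^ k) := by
  by_cases h : n = p ^ k
  · subst h
    rw [Nat.log_pow hp.out.one_lt, mahlerCoeffShift_eq_mahlerCoeffDiv,
      mahlerCoeffDiv_self (pow_pos hp.out.pos k)]
    simp
  · have hlt := pow_log_mul_norm_mahlerCoeffShift_lt (k := k) h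
    exact ⟨hlt.le, iff_of_false hlt.ne h⟩
end

section
/- Let T: Z_p → Z_p be (p^{-k}, p^k) locally scaling. Then for any j, n ≥ 1 and any y ∈ Z_p, the set T^{-n}(B(y, p^{-jk})) is a union of p^{kn} closed balls of radius p^{-k(n+j)}, exactly one inside each of the p^{kn} closed balls of radius p^{-kn} in Z_p. -/
/-!
Composing locally scaling maps multiplies their scale factors, so `T^[n]` is
`(p^{-kn}, p^{kn})` locally scaling. If `S` is `(p^{-K}, p^K)` locally scaling and `B` is a
ball of radius `p^{-K}`, then `t ↦ S (a + p^K t)` (for `a ∈ B`) is an isometry of the compact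
space `ℤ_p`, hence onto. So `S` takes the value `y` at some `c ∈ B`, and
`S⁻¹(B(y, r)) ∩ B = B(c, p^{-K} r)` for `r ≤ 1`. The `p^K` balls of radius `p^{-K}` are those
centred at `0, 1, …, p^K - 1`.
-/

open Metric Set

theorem Isometry.surjective_of_compactSpace {X : Type*} [MetricSpace X] [CompactSpace X]
    {f : X → X} (hf : Isometry f) : Function.Surjective f := by
  have hiter : ∀ m, Isometry f^[m] := by
    intro m
    induction m with
    | zero => exact isometry_id
    | succ m ih => rw [Function.iterate_succ]; exact ih.comp hf
  intro y
  suffices y ∈ closure (range f) by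
    rwa [(isCompact_range hf.continuous).isClosed.closure_eq] at this
  refine Metric.mem_closure_iff.2 fun ε hε => ?_
  -- The orbit has ε-close points `f^[φ N] y` and `f^[φ N + d + 1] y`; cancelling `f^[φ N]`
  -- puts `f^[d + 1] y` within ε of `y`.
  obtain ⟨x, -, φ, hφ, hlim⟩ := isCompact_univ.tendsto_subseq fun n => mem_univ (f^[n] y)
  obtain ⟨N, hN⟩ := Metric.cauchySeq_iff'.1 hlim.cauchySeq ε hε
  obtain ⟨d, hd⟩ := Nat.exists_eq_add_of_lt (hφ N.lt_succ_self)
  refine ⟨f^[d + 1] y, ⟨f^[d] y, (Function.iterate_succ_apply' f d y).symm⟩, ?_⟩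
  calc dist y (f^[d + 1] y) = dist (f^[φ N] y) (f^[φ N] (f^[d + 1] y)) :=
        ((hiter _).dist_eq _ _).symm
    _ = dist (f^[φ (N + 1)] y) (f^[φ N] y) := by
        rw [dist_comm, ← Function.iterate_add_apply, hd, add_assoc]
    _ < ε := hN (N + 1) N.le_succ

namespace PadicInt

variable {p : ℕ} [Fact p.Prime]

def IsLocallyScaling (k : ℕ) (T : ℤ_[p] → ℤ_[p]) : Prop :=
  ∀ x y : ℤ_[p], ‖x - y‖ ≤ (p : ℝ) ^ (-(k : ℤ)) →
    ‖T x - T y‖ = (p : ℝ) ^ (k : ℕ) * ‖x - y‖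

theorem norm_p_pow_mul (k : ℕ) (t : ℤ_[p]) :
    ‖(p : ℤ_[p]) ^ k * t‖ = (p : ℝ) ^ (-(k : ℤ)) * ‖t‖ := by
  rw [norm_mul, norm_p_pow]

theorem norm_sub_natCast_le_iff_toZModPow_eq (z : ℤ_[p]) (m i : ℕ) :
    ‖z - i‖ ≤ (p : ℝ) ^ (-(m : ℤ)) ↔ toZModPow m z = i := by
  rw [norm_le_pow_iff_mem_span_pow, ← ker_toZModPow, RingHom.mem_ker, map_sub, map_natCast,
    sub_eq_zero]

theorem existsUnique_norm_sub_natCast_le (z : ℤ_[p]) (m : ℕ) :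
    ∃! i : Fin (p ^ m), ‖z - (i : ℕ)‖ ≤ (p : ℝ) ^ (-(m : ℤ)) := by
  simp only [norm_sub_natCast_le_iff_toZModPow_eq]
  refine ⟨⟨(toZModPow m z).val, ZMod.val_lt _⟩, (ZMod.natCast_zmod_val _).symm, ?_⟩
  rintro ⟨i, hi⟩ hzi
  ext
  simp only [hzi, ZMod.val_natCast, Nat.mod_eq_of_lt hi]

namespace IsLocallyScaling

variable {k l : ℕ} {T S : ℤ_[p] → ℤ_[p]}

theorem comp (hT : IsLocallyScaling k T) (hS : IsLocallyScaling l S) :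
    IsLocallyScaling (k + l) (T ∘ S) := by
  intro x y hxy
  have hp : (0 : ℝ) < p := by exact_mod_cast (Fact.out : p.Prime).pos
  have hxy' : ‖x - y‖ ≤ (p : ℝ) ^ (-(l : ℤ)) :=
    hxy.trans (zpow_le_zpow_right₀ (by exact_mod_cast (Fact.out : p.Prime).one_le) (by omega))
  have hSxy : ‖S x - S y‖ ≤ (p : ℝ) ^ (-(k : ℤ)) := by
    rw [hS x y hxy', ← zpow_natCast, ← le_div_iff₀' (by positivity), ← zpow_sub₀ hp.ne']
    refine hxy.trans_eq (congrArg _ ?_)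
    push_cast
    ring
  simp only [Function.comp_apply, hT _ _ hSxy, hS x y hxy', pow_add, mul_assoc]

theorem iterate (hT : IsLocallyScaling k T) (n : ℕ) : IsLocallyScaling (k * n) T^[n] := by
  induction n with
  | zero => intro x y _; simp
  | succ n ih => rw [Function.iterate_succ, mul_add_one]; exact ih.comp hT

theorem exists_apply_eq (hT : IsLocallyScaling k T) (a b : ℤ_[p]) :
    ∃ x, ‖x - a‖ ≤ (p : ℝ) ^ (-(k : ℤ)) ∧ T x = b := by
  have hp : (0 : ℝ) < p := by exact_mod_cast (Fact.out : p.Prime).pos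
  have hdist (t s : ℤ_[p]) : ‖(a + (p : ℤ_[p]) ^ k * t) - (a + (p : ℤ_[p]) ^ k * s)‖ =
      (p : ℝ) ^ (-(k : ℤ)) * ‖t - s‖ := by
    rw [← norm_p_pow_mul]; congr 1; ring
  have hiso : Isometry fun t => T (a + (p : ℤ_[p]) ^ k * t) := by
    refine Isometry.of_dist_eq fun t s => ?_
    have hclose := (hdist t s).trans_le (mul_le_of_le_one_right (by positivity) (norm_le_one _))
    rw [dist_eq_norm, dist_eq_norm, hT _ _ hclose, hdist, ← mul_assoc, ← zpow_natCast,
      ← zpow_add₀ hp.ne', add_neg_cancel, zpow_zero, one_mul]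
  obtain ⟨t, rfl⟩ := hiso.surjective_of_compactSpace b
  refine ⟨a + (p : ℤ_[p]) ^ k * t, ?_, rfl⟩
  rw [add_sub_cancel_left, norm_p_pow_mul]
  exact mul_le_of_le_one_right (by positivity) (norm_le_one _)

theorem preimage_closedBall_inter_closedBall (hT : IsLocallyScaling k T) (c : ℤ_[p]) {r : ℝ}
    (hr : r ≤ 1) :
    T ⁻¹' closedBall (T c) r ∩ closedBall c ((p : ℝ) ^ (-(k : ℤ))) =
      closedBall c ((p : ℝ) ^ (-(k : ℤ)) * r) := by
  have hscale (t : ℝ) : (p : ℝ) ^ k * t ≤ r ↔ t ≤ (p : ℝ) ^ (-(k : ℤ)) * r := by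
    have hp : (0 : ℝ) < p := by exact_mod_cast (Fact.out : p.Prime).pos
    rw [zpow_neg, zpow_natCast, ← div_eq_inv_mul, le_div_iff₀' (by positivity)]
  ext x
  simp only [mem_inter_iff, mem_preimage, mem_closedBall, dist_eq_norm]
  constructor
  · rintro ⟨hTx, hx⟩
    rwa [hT x c hx, hscale] at hTx
  · intro hx
    have hx' := hx.trans (mul_le_of_le_one_right (by positivity) hr)
    exact ⟨by rwa [hT x c hx', hscale], hx'⟩

theorem exists_preimage_closedBall_eq_iUnion (hS : IsLocallyScaling k S) (y : ℤ_[p]) {r : ℝ}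
    (hr : r ≤ 1) :
    ∃ c : Fin (p ^ k) → ℤ_[p],
      S ⁻¹' closedBall y r = ⋃ i, closedBall (c i) ((p : ℝ) ^ (-(k : ℤ)) * r) ∧
      ∀ z, ∃! i, ‖z - c i‖ ≤ (p : ℝ) ^ (-(k : ℤ)) := by
  choose c hc hSc using fun i : Fin (p ^ k) => hS.exists_apply_eq (i : ℕ) y
  have hcover (z : ℤ_[p]) : ∃! i, z ∈ closedBall (c i) ((p : ℝ) ^ (-(k : ℤ))) := by
    have hball (i : Fin (p ^ k)) :=
      IsUltrametricDist.closedBall_eq_of_mem (mem_closedBall_iff_norm.2 (hc i))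
    simpa only [← hball, mem_closedBall_iff_norm] using existsUnique_norm_sub_natCast_le z k
  refine ⟨c, ?_, by simpa only [mem_closedBall_iff_norm] using hcover⟩
  ext x
  simp only [mem_iUnion, ← hS.preimage_closedBall_inter_closedBall _ hr, hSc]
  constructor
  · intro hx
    obtain ⟨i, hi, -⟩ := hcover x
    exact ⟨i, hx, hi⟩
  · rintro ⟨i, hx, -⟩
    exact hx

end IsLocallyScaling

end PadicInt

theorem locallyScaling_iterate_preimage_ball_general {p : ℕ} [hp : Fact p.Prime]
    (k j n : ℕ) (T : ℤ_[p] → ℤ_[p])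
    (hT : ∀ x y : ℤ_[p], ‖x - y‖ ≤ (p : ℝ) ^ (-(k : ℤ)) →
      ‖T x - T y‖ = (p : ℝ) ^ (k : ℕ) * ‖x - y‖)
    (y : ℤ_[p]) :
    ∃ c : Fin (p ^ (k * n)) → ℤ_[p],
      ((T^[n]) ⁻¹' Metric.closedBall y ((p : ℝ) ^ (-(j * k : ℤ))) =
        ⋃ i, Metric.closedBall (c i) ((p : ℝ) ^ (-(k * (n + j) : ℤ)))) ∧
      ∀ z : ℤ_[p], ∃! i : Fin (p ^ (k * n)), ‖z - c i‖ ≤ (p : ℝ) ^ (-(k * n : ℤ)) := by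
  have hTn : PadicInt.IsLocallyScaling (k * n) T^[n] := PadicInt.IsLocallyScaling.iterate hT n
  have hr : (p : ℝ) ^ (-(j * k : ℤ)) ≤ 1 :=
    zpow_le_one_of_nonpos₀ (by exact_mod_cast hp.out.one_le)
      (by simp only [neg_nonpos]; positivity)
  have hradius : (p : ℝ) ^ (-((k * n : ℕ) : ℤ)) * (p : ℝ) ^ (-(j * k : ℤ)) =
      (p : ℝ) ^ (-(k * (n + j) : ℤ)) := by
    rw [← zpow_add₀ (by exact_mod_cast hp.out.ne_zero)]
    congr 1
    push_cast
    ring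
  obtain ⟨c, hpre, hcover⟩ := hTn.exists_preimage_closedBall_eq_iUnion y hr
  rw [hradius] at hpre
  push_cast at hcover
  exact ⟨c, hpre, hcover⟩

/-- for `T` `(p^{-k}, p^k)` locally scaling, `T^{-n}(B(y, p^{-jk}))` is a
union of `p^{kn}` closed balls of radius `p^{-k(n+j)}`, exactly one inside each closed
ball of radius `p^{-kn}` in `ℤ_p`. -/
theorem locallyScaling_iterate_preimage_ball {p : ℕ} [hp : Fact p.Prime]
    (k j n : ℕ) (hk : 1 ≤ k) (hj : 1 ≤ j) (hn : 1 ≤ n) (T : ℤ_[p] → ℤ_[p])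
    (hT : ∀ x y : ℤ_[p], ‖x - y‖ ≤ (p : ℝ) ^ (-(k : ℤ)) →
      ‖T x - T y‖ = (p : ℝ) ^ (k : ℕ) * ‖x - y‖)
    (y : ℤ_[p]) :
    ∃ c : Fin (p ^ (k * n)) → ℤ_[p],
      ((T^[n]) ⁻¹' Metric.closedBall y ((p : ℝ) ^ (-(j * k : ℤ))) =
        ⋃ i, Metric.closedBall (c i) ((p : ℝ) ^ (-(k * (n + j) : ℤ)))) ∧
      ∀ z : ℤ_[p], ∃! i : Fin (p ^ (k * n)), ‖z - c i‖ ≤ (p : ℝ) ^ (-(k * n : ℤ)) :=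
  locallyScaling_iterate_preimage_ball_general (hp := hp) k j n T hT y
end
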